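/- arXiv:math/0607051 — 3 statements merged into one kernel-verified Lean document; each statement's English description precedes it below -/
import Mathlib

section
/- Roof*{(1,1,0), (0,1,1), (1,0,1)} = Cone*{(1,1,0), (0,1,1), (1,0,1)}; i.e., the conjugate roof over the three peaks v_xy, v_yz, v_xz equals the corresponding conjugate cone. -/
/-!
The peaks are the vectors `eⱼ + eₖ` with `j ≠ k`. If `l ∈ Roof*`, then for every `i` the
coordinates of `l` other than the `i`-th dominate those of some peak, so they are nonnegative and
one of them is at least `1`. Applying this to `i = 0` gives a coordinate `j` with `1 ≤ l j`, and
then to `i = j` a second one `k ≠ j`; hence `l` dominates the peak `eⱼ + eₖ`.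
-/

/-- `Cone* A`: the upward closure of `A ⊆ ℝ³` in the componentwise order. -/
def ConeC (A : Set (Fin 3 → ℝ)) : Set (Fin 3 → ℝ) :=
  {l | ∃ a ∈ A, ∀ i, a i ≤ l i}

/-- `Roof* A`: points `l` such that for some `m ∈ ℕ`, `l + m·eᵢ ∈ Cone* A` for all `i`. -/
def RoofC (A : Set (Fin 3 → ℝ)) : Set (Fin 3 → ℝ) :=
  {l | ∃ m : ℕ, ∀ i : Fin 3, l + (m : ℝ) • (Pi.single i 1 : Fin 3 → ℝ) ∈ ConeC A}

theorem ConeC_subset_RoofC (A : Set (Fin 3 → ℝ)) : ConeC A ⊆ RoofC A :=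
  fun _ hl => ⟨0, fun _ => by simpa using hl⟩

theorem exists_le_off_of_mem_RoofC {A : Set (Fin 3 → ℝ)} {l : Fin 3 → ℝ} (hl : l ∈ RoofC A)
    (i : Fin 3) : ∃ a ∈ A, ∀ j ≠ i, a j ≤ l j := by
  obtain ⟨m, hm⟩ := hl
  obtain ⟨a, ha, hle⟩ := hm i
  exact ⟨a, ha, fun j hj => by simpa [Pi.single_apply, hj] using hle j⟩

def pairPeaks : Set (Fin 3 → ℝ) :=
  {v | ∃ j k, j ≠ k ∧ v = Pi.single j 1 + Pi.single k 1}

theorem pairPeaks_eq : pairPeaks = {![1, 1, 0], ![0, 1, 1], ![1, 0, 1]} := by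
  ext v
  simp only [pairPeaks, Set.mem_ofPred_eq, Set.mem_insert_iff, Set.mem_singleton_iff]
  constructor
  · rintro ⟨j, k, hjk, rfl⟩
    fin_cases j <;> fin_cases k <;> simp [funext_iff, Fin.forall_fin_succ] at hjk ⊢
  · rintro (rfl | rfl | rfl)
    exacts [⟨0, 1, by decide, by ext i; fin_cases i <;> simp⟩,
      ⟨1, 2, by decide, by ext i; fin_cases i <;> simp⟩,
      ⟨0, 2, by decide, by ext i; fin_cases i <;> simp⟩]

section SingleAddSingle

variable {ι : Type*} [DecidableEq ι]

theorem single_add_single_apply_left {j k : ι} (hjk : j ≠ k) :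
    (Pi.single j 1 + Pi.single k 1 : ι → ℝ) j = 1 := by
  simp [hjk]

theorem nonneg_and_exists_one_le_of_single_add_single_le {l : ι → ℝ} {i p q : ι} (hpq : p ≠ q)
    (hle : ∀ t ≠ i, (Pi.single p 1 + Pi.single q 1 : ι → ℝ) t ≤ l t) :
    (∀ t ≠ i, 0 ≤ l t) ∧ ∃ j ≠ i, 1 ≤ l j := by
  refine ⟨fun t ht => le_trans ?_ (hle t ht), ?_⟩
  · simp only [Pi.add_apply, Pi.single_apply]
    positivity
  by_cases hp : p = i
  · have hq : q ≠ i := hp ▸ hpq.symm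
    rw [add_comm] at hle
    exact ⟨q, hq, (single_add_single_apply_left hpq.symm).symm.le.trans (hle q hq)⟩
  · exact ⟨p, hp, (single_add_single_apply_left hpq).symm.le.trans (hle p hp)⟩

end SingleAddSingle

theorem mem_ConeC_pairPeaks {l : Fin 3 → ℝ} (hl : ∀ t, 0 ≤ l t) {j k : Fin 3} (hjk : j ≠ k)
    (hj : 1 ≤ l j) (hk : 1 ≤ l k) : l ∈ ConeC pairPeaks := by
  refine ⟨_, ⟨j, k, hjk, rfl⟩, fun t => ?_⟩
  by_cases htj : t = j
  · subst htj
    simpa [hjk] using hj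
  by_cases htk : t = k
  · subst htk
    simpa [htj] using hk
  simpa [Pi.single_apply, htj, htk] using hl t

theorem RoofC_pairPeaks_subset : RoofC pairPeaks ⊆ ConeC pairPeaks := by
  intro l hl
  have off : ∀ i, (∀ t ≠ i, 0 ≤ l t) ∧ ∃ j ≠ i, 1 ≤ l j := fun i => by
    obtain ⟨_, ⟨p, q, hpq, rfl⟩, hle⟩ := exists_le_off_of_mem_RoofC hl i
    exact nonneg_and_exists_one_le_of_single_add_single_le hpq hle
  have nonneg : ∀ t, 0 ≤ l t := fun t => by
    obtain ⟨i, hi⟩ := exists_ne t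
    exact (off i).1 t hi.symm
  obtain ⟨j, -, hj⟩ := (off 0).2
  obtain ⟨k, hkj, hk⟩ := (off j).2
  exact mem_ConeC_pairPeaks nonneg hkj.symm hj hk

theorem stmt_9 :
    RoofC {![1, 1, 0], ![0, 1, 1], ![1, 0, 1]} =
      ConeC {![1, 1, 0], ![0, 1, 1], ![1, 0, 1]} := by
  rw [← pairPeaks_eq]
  exact RoofC_pairPeaks_subset.antisymm (ConeC_subset_RoofC _)
end

section
/- Each σ-equivalence class of slant tiles (flat triangle tile) contains exactly one σ³-equivalence class for each of the three gradient values x₁x₂, x₂x₃, x₁x₃; i.e., the tangent bundle T[B₃] = S₃/∼_{σ³} is in bijection with B₃ × {x₁x₂, x₂x₃, x₁x₃} via s mod σ³ ↦ (s mod σ, Ds), where the gradient D(a,ρ) := {ρ(1), ρ(2)} (the unordered pair). -/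
/-- A slant triangle tile `a[x_{ρ(1)} x_{ρ(2)}]`, encoded as a pair `(a, ρ)` with
`a ∈ ℤ³` and `ρ` a permutation of `{1,2,3}` (here `Fin 3`). -/
abbrev Tile := (Fin 3 → ℤ) × Equiv.Perm (Fin 3)

/-- The shift operator `σ(a, ρ) := (a + e_{ρ(1)}, ρ ∘ (1 2 3))`, as a bijection of
the set of slant tiles (so that integer powers `σ^k`, `k ∈ ℤ`, make sense). -/
def shiftEquiv : Equiv.Perm Tile where
  toFun s := (s.1 + Pi.single (s.2 0) 1, s.2 * finRotate 3)
  invFun s := (s.1 - Pi.single ((s.2 * (finRotate 3)⁻¹) 0) 1, s.2 * (finRotate 3)⁻¹)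
  left_inv s := by
    simp
  right_inv s := by
    simp

/-- σ-equivalence: its classes are the flat triangle tiles, so `B₃ = Quot rSigma`. -/
def rSigma (s₁ s₂ : Tile) : Prop := ∃ k : ℤ, (shiftEquiv ^ k) s₁ = s₂

/-- σ³-equivalence: its classes are the points of the tangent bundle `T[B₃]`. -/
def rSigma3 (s₁ s₂ : Tile) : Prop := ∃ k : ℤ, (shiftEquiv ^ (3 * k)) s₁ = s₂

/-- The gradient `D(a,ρ) = x_{ρ(1)} x_{ρ(2)}`, identified with the unordered pair
`{ρ(1), ρ(2)}`, an element of the 3-element set of 2-element subsets of `{1,2,3}`. -/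
def Dgrad (s : Tile) : {g : Finset (Fin 3) // g.card = 2} :=
  ⟨{s.2 0, s.2 1}, Finset.card_pair (s.2.injective.ne (by decide))⟩

/- ### Auxiliary lemmas -/

lemma shift_apply_snd (s : Tile) : (shiftEquiv s).2 = s.2 * finRotate 3 := rfl

lemma shift_inv_apply_snd (s : Tile) : (shiftEquiv⁻¹ s).2 = s.2 * (finRotate 3)⁻¹ := rfl

lemma zpow_apply_snd (k : ℤ) : ∀ s : Tile,
    ((shiftEquiv ^ k) s).2 = s.2 * (finRotate 3) ^ k := by
  induction k using Int.induction_on with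
  | zero => intro s; simp
  | succ n ih =>
      intro s
      have h1 : (shiftEquiv ^ ((n : ℤ) + 1)) s = (shiftEquiv ^ (n : ℤ)) (shiftEquiv s) := by
        rw [zpow_add_one]; rfl
      rw [h1, ih (shiftEquiv s), shift_apply_snd]
      group
  | pred n ih =>
      intro s
      have h1 : (shiftEquiv ^ (-(n : ℤ) - 1)) s = (shiftEquiv ^ (-(n : ℤ))) (shiftEquiv⁻¹ s) := by
        rw [zpow_sub_one]; rfl
      rw [h1, ih (shiftEquiv⁻¹ s), shift_inv_apply_snd]
      group

lemma rot_cube : (finRotate 3) ^ (3 : ℤ) = 1 := by decide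

lemma rot_zpow_mod (k : ℤ) :
    (finRotate 3) ^ k = (finRotate 3) ^ ((k % 3).toNat) := by
  have h : k = 3 * (k / 3) + k % 3 := (Int.mul_ediv_add_emod k 3).symm
  have hnn : (0 : ℤ) ≤ k % 3 := Int.emod_nonneg k (by norm_num)
  calc (finRotate 3) ^ k = ((finRotate 3) ^ (3:ℤ)) ^ (k / 3) * (finRotate 3) ^ (k % 3) := by
        rw [← zpow_mul, ← zpow_add, ← h]
    _ = (finRotate 3) ^ (k % 3) := by rw [rot_cube]; simp
    _ = (finRotate 3) ^ ((k % 3).toNat) := by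
        rw [← zpow_natCast, Int.toNat_of_nonneg hnn]

lemma key_inj : ∀ ρ : Equiv.Perm (Fin 3), ∀ j : Fin 3,
    ({(ρ * (finRotate 3) ^ (j : ℕ)) 0, (ρ * (finRotate 3) ^ (j : ℕ)) 1} : Finset (Fin 3))
      = {ρ 0, ρ 1} → j = 0 := by decide

lemma key_surj : ∀ ρ : Equiv.Perm (Fin 3), ∀ g : Finset (Fin 3), g.card = 2 →
    ∃ j : Fin 3,
      ({(ρ * (finRotate 3) ^ (j : ℕ)) 0, (ρ * (finRotate 3) ^ (j : ℕ)) 1} : Finset (Fin 3))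
        = g := by decide

lemma rSigma_equiv : Equivalence rSigma := by
  constructor
  · intro s; exact ⟨0, by simp⟩
  · rintro s t ⟨k, hk⟩
    refine ⟨-k, ?_⟩
    rw [← hk]
    have : (shiftEquiv ^ (-k)) ((shiftEquiv ^ k) s) = (shiftEquiv ^ (-k) * shiftEquiv ^ k) s := rfl
    rw [this, ← zpow_add]; simp
  · rintro s t u ⟨k₁, hk₁⟩ ⟨k₂, hk₂⟩
    refine ⟨k₂ + k₁, ?_⟩
    rw [← hk₂, ← hk₁]
    rw [zpow_add]; rfl

lemma Dgrad_zpow_eq (k : ℤ) (s : Tile) (h3 : (3 : ℤ) ∣ k) :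
    Dgrad ((shiftEquiv ^ k) s) = Dgrad s := by
  apply Subtype.ext
  show ({((shiftEquiv ^ k) s).2 0, ((shiftEquiv ^ k) s).2 1} : Finset (Fin 3)) = _
  rw [zpow_apply_snd]
  obtain ⟨m, rfl⟩ := h3
  rw [zpow_mul, rot_cube]
  simp
  rfl

theorem stmt_14 :
    ∃ h : ∀ s₁ s₂ : Tile, rSigma3 s₁ s₂ →
        ((Quot.mk rSigma s₁, Dgrad s₁) = (Quot.mk rSigma s₂, Dgrad s₂)),
      Function.Bijective
        (Quot.lift (fun s : Tile => (Quot.mk rSigma s, Dgrad s)) h) := by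
  have h : ∀ s₁ s₂ : Tile, rSigma3 s₁ s₂ →
      ((Quot.mk rSigma s₁, Dgrad s₁) = (Quot.mk rSigma s₂, Dgrad s₂)) := by
    rintro s₁ s₂ ⟨k, hk⟩
    have h1 : Quot.mk rSigma s₁ = Quot.mk rSigma s₂ := Quot.sound ⟨3 * k, hk⟩
    have h2 : Dgrad s₁ = Dgrad s₂ := by
      rw [← hk, Dgrad_zpow_eq (3 * k) s₁ ⟨k, rfl⟩]
    rw [h1, h2]
  refine ⟨h, ?_, ?_⟩
  · -- injectivity
    intro q₁ q₂
    induction q₁ using Quot.ind with | _ t₁ =>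
    induction q₂ using Quot.ind with | _ t₂ =>
    intro heq
    have hq : Quot.mk rSigma t₁ = Quot.mk rSigma t₂ := congrArg Prod.fst heq
    have hD : Dgrad t₁ = Dgrad t₂ := congrArg Prod.snd heq
    have hrel : rSigma t₁ t₂ := by
      have := Quot.eqvGen_exact hq
      exact (rSigma_equiv.eqvGen_iff).mp this
    obtain ⟨k, hk⟩ := hrel
    -- show 3 ∣ k
    have hnn : (0 : ℤ) ≤ k % 3 := Int.emod_nonneg k (by norm_num)
    have hlt : k % 3 < 3 := Int.emod_lt_of_pos k (by norm_num)
    have hr3 : (k % 3).toNat < 3 := by omega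
    set j : Fin 3 := ⟨(k % 3).toNat, hr3⟩ with hj
    have hset : ({(t₁.2 * (finRotate 3) ^ (j : ℕ)) 0, (t₁.2 * (finRotate 3) ^ (j : ℕ)) 1} :
        Finset (Fin 3)) = {t₁.2 0, t₁.2 1} := by
      have : (Dgrad t₂).1 = (Dgrad t₁).1 := by rw [hD]
      have h2 : (Dgrad ((shiftEquiv ^ k) t₁)).1 = (Dgrad t₁).1 := by rw [hk]; exact this
      have h3 : (Dgrad ((shiftEquiv ^ k) t₁)).1 =
          ({(t₁.2 * (finRotate 3) ^ (j : ℕ)) 0, (t₁.2 * (finRotate 3) ^ (j : ℕ)) 1} :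
            Finset (Fin 3)) := by
        show ({((shiftEquiv ^ k) t₁).2 0, ((shiftEquiv ^ k) t₁).2 1} : Finset (Fin 3)) = _
        rw [zpow_apply_snd, rot_zpow_mod]
      rw [← h3]; exact h2
    have hj0 : j = 0 := key_inj t₁.2 j hset
    have hmod : k % 3 = 0 := by
      have : (k % 3).toNat = 0 := congrArg Fin.val hj0
      omega
    have hdvd : (3 : ℤ) ∣ k := Int.dvd_of_emod_eq_zero hmod
    obtain ⟨m, rfl⟩ := hdvd
    exact Quot.sound ⟨m, hk⟩
  · -- surjectivity
    rintro ⟨q, g⟩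
    induction q using Quot.ind with | _ s =>
    obtain ⟨j, hjg⟩ := key_surj s.2 g.1 g.2
    refine ⟨Quot.mk rSigma3 ((shiftEquiv ^ ((j : ℕ) : ℤ)) s), ?_⟩
    show (Quot.mk rSigma ((shiftEquiv ^ ((j : ℕ) : ℤ)) s), Dgrad ((shiftEquiv ^ ((j : ℕ) : ℤ)) s)) = (Quot.mk rSigma s, g)
    have h1 : Quot.mk rSigma ((shiftEquiv ^ ((j : ℕ) : ℤ)) s) = Quot.mk rSigma s :=
      (Quot.sound ⟨((j : ℕ) : ℤ), rfl⟩).symm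
    have h2 : Dgrad ((shiftEquiv ^ ((j : ℕ) : ℤ)) s) = g := by
      apply Subtype.ext
      show ({((shiftEquiv ^ ((j : ℕ) : ℤ)) s).2 0, ((shiftEquiv ^ ((j : ℕ) : ℤ)) s).2 1} : Finset (Fin 3)) = g.1
      rw [zpow_apply_snd, zpow_natCast]
      exact hjg
    rw [h1, h2]
end

section
/- Addition of conjugate roofs, defined by Roof* A + Roof* B := Roof*(A ∪ B), is well-defined (depends only on the roofs, not on the generating sets), commutative, and associative on the set of conjugate roofs of finite subsets of ℤ³. -/
/-- Embed a subset of the lattice `ℤ³` into `ℝ³`. -/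
def latt (A : Set (Fin 3 → ℤ)) : Set (Fin 3 → ℝ) :=
  (fun l i => (l i : ℝ)) '' A

/-! `Roof*` is a closure operator on subsets of `ℝ³`, so `Roof* (A ∪ B) = Roof* (Roof* A ∪ Roof* B)`
depends only on the two roofs; commutativity and associativity are those of `∪`. -/

lemma coneC_of_le {S : Set (Fin 3 → ℝ)} {l l' : Fin 3 → ℝ} (h : l ≤ l') (hl : l ∈ ConeC S) :
    l' ∈ ConeC S := by
  obtain ⟨a, ha, hal⟩ := hl
  exact ⟨a, ha, fun i => (hal i).trans (h i)⟩

lemma coneC_mono {S T : Set (Fin 3 → ℝ)} (h : S ⊆ T) : ConeC S ⊆ ConeC T := by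
  rintro l ⟨a, ha, hal⟩
  exact ⟨a, h ha, hal⟩

lemma roofC_mono : Monotone RoofC := by
  rintro S T h l ⟨m, hm⟩
  exact ⟨m, fun i => coneC_mono h (hm i)⟩

lemma subset_roofC (S : Set (Fin 3 → ℝ)) : S ⊆ RoofC S := by
  intro l hl
  exact ⟨0, fun i => by simpa using coneC_of_le le_rfl ⟨l, hl, fun _ => le_rfl⟩⟩

/-- Of the witnesses `a i + f i • e j ∈ Cone* S` only the diagonal ones `j = i` are needed:
pushing `l` along `eᵢ` by `m + max_j f j` dominates `a i + f i • eᵢ`. -/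
lemma roofC_roofC_subset (S : Set (Fin 3 → ℝ)) : RoofC (RoofC S) ⊆ RoofC S := by
  rintro l ⟨m, hm⟩
  choose a haR hal using hm
  choose f hf using haR
  refine ⟨m + Finset.univ.sup f, fun i => coneC_of_le ?_ (hf i i)⟩
  have he : (0 : Fin 3 → ℝ) ≤ Pi.single i 1 := Pi.single_nonneg.mpr zero_le_one
  have hf_le : (f i : ℝ) ≤ (Finset.univ.sup f : ℕ) := by
    exact_mod_cast Finset.le_sup (Finset.mem_univ i)
  calc a i + (f i : ℝ) • Pi.single i 1
      ≤ l + (m : ℝ) • Pi.single i 1 + (f i : ℝ) • Pi.single i 1 := by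
        gcongr
        exact hal i
    _ ≤ l + (m : ℝ) • Pi.single i 1 + ((Finset.univ.sup f : ℕ) : ℝ) • Pi.single i 1 := by
        gcongr
    _ = l + ((m + Finset.univ.sup f : ℕ) : ℝ) • Pi.single i 1 := by
        push_cast
        rw [add_smul, add_assoc]

def roofClosure : ClosureOperator (Set (Fin 3 → ℝ)) :=
  ClosureOperator.mk' RoofC roofC_mono subset_roofC roofC_roofC_subset

lemma roofC_union_roofC (S T : Set (Fin 3 → ℝ)) :
    RoofC (RoofC S ∪ RoofC T) = RoofC (S ∪ T) :=
  roofClosure.closure_sup_closure S T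

lemma latt_union (A B : Set (Fin 3 → ℤ)) : latt (A ∪ B) = latt A ∪ latt B :=
  Set.image_union _ _ _

/-- Addition of conjugate roofs `Roof* A + Roof* B := Roof* (A ∪ B)` (for finite
`A, B ⊆ ℤ³`) is well defined (depends only on the roofs, not on the generating sets),
commutative, and associative. -/
theorem stmt_17 :
    (∀ A A' B B' : Set (Fin 3 → ℤ), A.Finite → A'.Finite → B.Finite → B'.Finite →
      RoofC (latt A) = RoofC (latt A') → RoofC (latt B) = RoofC (latt B') →
      RoofC (latt (A ∪ B)) = RoofC (latt (A' ∪ B'))) ∧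
    (∀ A B : Set (Fin 3 → ℤ), A.Finite → B.Finite →
      RoofC (latt (A ∪ B)) = RoofC (latt (B ∪ A))) ∧
    (∀ A B C : Set (Fin 3 → ℤ), A.Finite → B.Finite → C.Finite →
      RoofC (latt ((A ∪ B) ∪ C)) = RoofC (latt (A ∪ (B ∪ C)))) := by
  refine ⟨fun A A' B B' _ _ _ _ hA hB => ?_,
    fun A B _ _ => by rw [Set.union_comm],
    fun A B C _ _ _ => by rw [Set.union_assoc]⟩
  rw [latt_union, latt_union, ← roofC_union_roofC, hA, hB, roofC_union_roofC]
end
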